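/- Let H ∈ (0,1/2) and μ(k) = ∫₀¹ ∫_k^{k+1} ⟨1_{[k,v']}, 1_{[0,v]}⟩_H dv' dv as above. Then |μ(k)| ≤ K·ρ(k)^{2H−2} for some constant K and all k ∈ ℤ, where ρ(k) = max(|k|,1); consequently the series c_H = Σ_{k ∈ ℤ} μ(k) converges absolutely. -/

import Mathlib

/-!
For `|k| ≥ 2` the intervals `[0, v]` and `[k, v']` are separated by a gap of length at
least `|k| / 2`, and there `⟨1_{[a,b]}, 1_{[c,d]}⟩_H` is a second difference of `t ↦ t^{2H}`.
Two applications of the mean value theorem bound it by a multiple of `(b - a)(d - c)`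
times the largest value of `|t|^{2H-2}` on the gap, hence by a multiple of `|k|^{2H-2}`.
The finitely many remaining `k` are handled by a crude bound, and summability follows by
comparison with `∑ |k|^{2H-2}`, which converges since `2H - 2 < -1`.
-/

/-- The covariance `E[(x_b − x_a)(x_d − x_c)]` of increments of a fBm with Hurst
parameter `H`. -/
noncomputable def fbmCov (H a b c d : ℝ) : ℝ :=
  (|b - c| ^ (2 * H) + |a - d| ^ (2 * H) - |b - d| ^ (2 * H) - |a - c| ^ (2 * H)) / 2

/-- `μ(m) = ∫₀¹ ∫_m^{m+1} ⟨1_{[m,v']}, 1_{[0,v]}⟩_H dv' dv`, extended to `m ∈ ℤ`. -/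
noncomputable def muH (H : ℝ) (m : ℤ) : ℝ :=
  ∫ v in (0 : ℝ)..1, ∫ v' in (m : ℝ)..((m : ℝ) + 1), fbmCov H (m : ℝ) v' 0 v

open Set
open scoped Interval

lemma fbmCov_comm (H a b c d : ℝ) : fbmCov H a b c d = fbmCov H c d a b := by
  rw [fbmCov, fbmCov, abs_sub_comm b c, abs_sub_comm a d, abs_sub_comm b d, abs_sub_comm a c]
  ring

lemma abs_rpow_sub_rpow_le {p x y : ℝ} (hp : p ≤ 1) (hx : 0 < x) (hxy : x ≤ y) :
    |y ^ p - x ^ p| ≤ |p| * x ^ (p - 1) * (y - x) := by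
  have hderiv : ∀ t ∈ Icc x y,
      HasDerivWithinAt (fun s : ℝ => s ^ p) (p * t ^ (p - 1)) (Icc x y) t := fun t ht =>
    (Real.hasDerivAt_rpow_const (Or.inl (hx.trans_le ht.1).ne')).hasDerivWithinAt
  have hbound : ∀ t ∈ Icc x y, ‖p * t ^ (p - 1)‖ ≤ |p| * x ^ (p - 1) := fun t ht => by
    rw [Real.norm_eq_abs, abs_mul, abs_of_nonneg (Real.rpow_nonneg (hx.le.trans ht.1) _)]
    exact mul_le_mul_of_nonneg_left (Real.rpow_le_rpow_of_nonpos hx ht.1 (by linarith))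
      (abs_nonneg p)
  simpa [Real.norm_eq_abs, abs_of_nonneg (sub_nonneg.2 hxy)] using
    (convex_Icc x y).norm_image_sub_le_of_norm_hasDerivWithin_le hderiv hbound
      (left_mem_Icc.2 hxy) (right_mem_Icc.2 hxy)

/-- Here `2 fbmCov H a b c d = g b - g a` with `g t = (t - c)^(2H) - (t - d)^(2H)`, and the
mean value theorem applied to `t ↦ t^(2H-1)` on `[t - d, t - c]` bounds `g'` on `[a, b]`. -/
lemma abs_fbmCov_le_of_lt {H a b c d : ℝ} (hH0 : 0 ≤ H) (hH1 : H ≤ 1)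
    (hcd : c ≤ d) (hda : d < a) (hab : a ≤ b) :
    |fbmCov H a b c d| ≤ H * |2 * H - 1| * (b - a) * (d - c) * (a - d) ^ (2 * H - 2) := by
  set g : ℝ → ℝ := fun t => (t - c) ^ (2 * H) - (t - d) ^ (2 * H)
  have hcov : fbmCov H a b c d = (g b - g a) / 2 := by
    simp only [fbmCov, g, abs_of_pos (by linarith : 0 < b - c),
      abs_of_pos (by linarith : 0 < a - d), abs_of_pos (by linarith : 0 < b - d),
      abs_of_pos (by linarith : 0 < a - c)]
    ring
  have hderiv : ∀ t ∈ Icc a b, HasDerivWithinAt g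
      (2 * H * ((t - c) ^ (2 * H - 1) - (t - d) ^ (2 * H - 1))) (Icc a b) t := by
    intro t ht
    have hc := ((hasDerivAt_id' t).sub_const c).rpow_const (p := 2 * H)
      (Or.inl (by linarith [ht.1]))
    have hd := ((hasDerivAt_id' t).sub_const d).rpow_const (p := 2 * H)
      (Or.inl (by linarith [ht.1]))
    exact ((hc.sub hd).congr_deriv (by ring)).hasDerivWithinAt
  have hbound : ∀ t ∈ Icc a b, ‖2 * H * ((t - c) ^ (2 * H - 1) - (t - d) ^ (2 * H - 1))‖
      ≤ 2 * H * |2 * H - 1| * (d - c) * (a - d) ^ (2 * H - 2) := by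
    intro t ht
    have hmvt := abs_rpow_sub_rpow_le (p := 2 * H - 1) (by linarith)
      (by linarith [ht.1] : 0 < t - d) (by linarith : t - d ≤ t - c)
    have hmono : (t - d) ^ (2 * H - 2) ≤ (a - d) ^ (2 * H - 2) :=
      Real.rpow_le_rpow_of_nonpos (by linarith) (by linarith [ht.1]) (by linarith)
    rw [show 2 * H - 1 - 1 = 2 * H - 2 by ring, show t - c - (t - d) = d - c by ring] at hmvt
    rw [Real.norm_eq_abs, abs_mul, abs_of_nonneg (by linarith : 0 ≤ 2 * H)]
    calc 2 * H * |(t - c) ^ (2 * H - 1) - (t - d) ^ (2 * H - 1)|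
        ≤ 2 * H * (|2 * H - 1| * (t - d) ^ (2 * H - 2) * (d - c)) := by gcongr
      _ ≤ 2 * H * (|2 * H - 1| * (a - d) ^ (2 * H - 2) * (d - c)) := by gcongr
      _ = _ := by ring
  have hmvt := (convex_Icc a b).norm_image_sub_le_of_norm_hasDerivWithin_le hderiv hbound
    (left_mem_Icc.2 hab) (right_mem_Icc.2 hab)
  rw [Real.norm_eq_abs, Real.norm_eq_abs, abs_of_nonneg (sub_nonneg.2 hab)] at hmvt
  rw [hcov, abs_div, abs_two]
  linarith

lemma abs_fbmCov_le_rpow {H a b c d L : ℝ} (hH : 0 ≤ H) (hbc : |b - c| ≤ L)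
    (had : |a - d| ≤ L) (hbd : |b - d| ≤ L) (hac : |a - c| ≤ L) :
    |fbmCov H a b c d| ≤ L ^ (2 * H) := by
  have hterm : ∀ {x : ℝ}, |x| ≤ L → 0 ≤ |x| ^ (2 * H) ∧ |x| ^ (2 * H) ≤ L ^ (2 * H) :=
    fun hx => ⟨by positivity, Real.rpow_le_rpow (abs_nonneg _) hx (by linarith)⟩
  obtain ⟨h1, h1'⟩ := hterm hbc
  obtain ⟨h2, h2'⟩ := hterm had
  obtain ⟨h3, h3'⟩ := hterm hbd
  obtain ⟨h4, h4'⟩ := hterm hac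
  rw [fbmCov, abs_le]
  constructor <;> linarith

lemma rpow_le_four_mul_rpow_of_half_le {q M x : ℝ} (hq2 : -2 ≤ q) (hq0 : q ≤ 0) (hM : 0 < M)
    (hx : M / 2 ≤ x) : x ^ q ≤ 4 * M ^ q := by
  have htwo : (2 : ℝ) ^ (-q) ≤ 4 := by
    calc (2 : ℝ) ^ (-q) ≤ 2 ^ (2 : ℝ) :=
          Real.rpow_le_rpow_of_exponent_le one_le_two (by linarith)
      _ = 4 := by norm_num
  calc x ^ q ≤ (M / 2) ^ q := Real.rpow_le_rpow_of_nonpos (by positivity) hx hq0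
    _ = M ^ q * 2 ^ (-q) := by
        rw [Real.div_rpow hM.le zero_le_two, Real.rpow_neg zero_le_two, div_eq_mul_inv]
    _ ≤ M ^ q * 4 := by gcongr
    _ = 4 * M ^ q := mul_comm _ _

lemma abs_fbmCov_le_rpow_sub_of_le_add_one {H a b c d : ℝ} (hH0 : 0 ≤ H) (hH1 : H ≤ 1)
    (hcd : c ≤ d) (hda : d < a) (hab : a ≤ b) (hba : b ≤ a + 1) (hdc : d ≤ c + 1) :
    |fbmCov H a b c d| ≤ (a - d) ^ (2 * H - 2) := by
  have hconst : H * |2 * H - 1| ≤ 1 := by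
    have : |2 * H - 1| ≤ 1 := abs_le.2 ⟨by linarith, by linarith⟩
    nlinarith [abs_nonneg (2 * H - 1)]
  calc |fbmCov H a b c d|
      ≤ H * |2 * H - 1| * (b - a) * (d - c) * (a - d) ^ (2 * H - 2) :=
        abs_fbmCov_le_of_lt hH0 hH1 hcd hda hab
    _ ≤ 1 * 1 * 1 * (a - d) ^ (2 * H - 2) := by
        gcongr <;> linarith
    _ = (a - d) ^ (2 * H - 2) := by ring

lemma abs_fbmCov_le_of_mem_Icc {H : ℝ} (hH0 : 0 ≤ H) (hH1 : H ≤ 1 / 2) (m : ℤ) {v v' : ℝ}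
    (hv : v ∈ Icc (0 : ℝ) 1) (hv' : v' ∈ Icc (m : ℝ) (m + 1)) :
    |fbmCov H m v' 0 v| ≤ 4 * (max |(m : ℝ)| 1) ^ (2 * H - 2) := by
  obtain ⟨hv0, hv1⟩ := hv
  obtain ⟨hmv', hv'm⟩ := hv'
  rcases (by omega : m ≤ -2 ∨ (-1 ≤ m ∧ m ≤ 1) ∨ 2 ≤ m) with hm | ⟨hm, hm'⟩ | hm
  · have hm : (m : ℝ) ≤ -2 := by exact_mod_cast hm
    have habs : |(m : ℝ)| = -m := abs_of_neg (by linarith)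
    rw [habs, max_eq_left (by linarith), fbmCov_comm]
    calc |fbmCov H 0 v m v'| ≤ (0 - v') ^ (2 * H - 2) :=
          abs_fbmCov_le_rpow_sub_of_le_add_one hH0 (by linarith) hmv' (by linarith) hv0
            (by linarith) hv'm
      _ ≤ 4 * (-(m : ℝ)) ^ (2 * H - 2) :=
          rpow_le_four_mul_rpow_of_half_le (by linarith) (by linarith) (by linarith)
            (by linarith)
  · have hm : -1 ≤ (m : ℝ) := by exact_mod_cast hm
    have hm' : (m : ℝ) ≤ 1 := by exact_mod_cast hm'
    rw [max_eq_right (abs_le.2 ⟨hm, hm'⟩), Real.one_rpow, mul_one]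
    calc |fbmCov H m v' 0 v| ≤ 3 ^ (2 * H) :=
          abs_fbmCov_le_rpow hH0 (abs_le.2 ⟨by linarith, by linarith⟩)
            (abs_le.2 ⟨by linarith, by linarith⟩) (abs_le.2 ⟨by linarith, by linarith⟩)
            (abs_le.2 ⟨by linarith, by linarith⟩)
      _ ≤ 3 ^ (1 : ℝ) := Real.rpow_le_rpow_of_exponent_le (by norm_num) (by linarith)
      _ ≤ 4 := by norm_num
  · have hm : (2 : ℝ) ≤ m := by exact_mod_cast hm
    have habs : |(m : ℝ)| = m := abs_of_pos (by linarith)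
    rw [habs, max_eq_left (by linarith)]
    calc |fbmCov H m v' 0 v| ≤ (m - v) ^ (2 * H - 2) :=
          abs_fbmCov_le_rpow_sub_of_le_add_one hH0 (by linarith) hv0 (by linarith) hmv' hv'm
            (by linarith)
      _ ≤ 4 * (m : ℝ) ^ (2 * H - 2) :=
          rpow_le_four_mul_rpow_of_half_le (by linarith) (by linarith) (by linarith)
            (by linarith)

lemma abs_muH_le {H : ℝ} (hH0 : 0 ≤ H) (hH1 : H ≤ 1 / 2) (m : ℤ) :
    |muH H m| ≤ 4 * (max |(m : ℝ)| 1) ^ (2 * H - 2) := by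
  have hinner : ∀ v ∈ Ι (0 : ℝ) 1, ‖∫ v' in (m : ℝ)..(m + 1), fbmCov H m v' 0 v‖
      ≤ 4 * (max |(m : ℝ)| 1) ^ (2 * H - 2) := by
    intro v hv
    rw [uIoc_of_le zero_le_one] at hv
    have hbound : ∀ v' ∈ Ι (m : ℝ) (m + 1), ‖fbmCov H m v' 0 v‖
        ≤ 4 * (max |(m : ℝ)| 1) ^ (2 * H - 2) := by
      intro v' hv'
      rw [uIoc_of_le (by linarith)] at hv'
      exact abs_fbmCov_le_of_mem_Icc hH0 hH1 m (Ioc_subset_Icc_self hv) (Ioc_subset_Icc_self hv')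
    simpa using intervalIntegral.norm_integral_le_of_norm_le_const hbound
  simpa [muH] using intervalIntegral.norm_integral_le_of_norm_le_const hinner

lemma summable_max_abs_one_rpow {q : ℝ} (hq : q < -1) :
    Summable fun m : ℤ => (max |(m : ℝ)| 1) ^ q := by
  refine (Real.summable_abs_int_rpow (b := -q) (by linarith)).congr_cofinite ?_
  filter_upwards [(finite_singleton (0 : ℤ)).compl_mem_cofinite] with m hm
  rw [neg_neg, max_eq_left]
  exact_mod_cast Int.one_le_abs hm

/-- `|μ(k)| ≤ K·ρ(k)^{2H−2}` with `ρ(k) = max(|k|,1)`; consequently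
the series `c_H = Σ_{k∈ℤ} μ(k)` converges absolutely. -/
theorem muH_bound_and_summable (H : ℝ) (hH0 : 0 < H) (hH1 : H < 1 / 2) :
    (∃ K > 0, ∀ m : ℤ,
      |muH H m| ≤ K * (max |(m : ℝ)| 1) ^ (2 * H - 2)) ∧
    Summable (fun m : ℤ => |muH H m|) :=
  ⟨⟨4, by norm_num, abs_muH_le hH0.le hH1.le⟩,
    Summable.of_nonneg_of_le (fun _ => abs_nonneg _) (abs_muH_le hH0.le hH1.le)
      ((summable_max_abs_one_rpow (by linarith)).mul_left 4)⟩
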